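/- arXiv:1812.11966 — 5 statements merged into one kernel-verified Lean document; each statement's English description precedes it below -/
import Mathlib

section
/- Let (d, Q, E) be a VASS and let (q, v), (q', v') be configurations. Suppose (Θ1) for every m ≥ 1 there is a pseudo-run from (q, v) to (q', v') that uses every arc of E at least m times, and (Θ2) there exist vectors Δ, Δ' ∈ ℕ^d with every coordinate ≥ 1 such that (q, v) →*ℕ (q, v + Δ) and (q', v' + Δ') →*ℕ (q', v'). Then (q, v) →*ℕ (q', v'). -/
/-- Vectors in `ℤ^d`. -/
abbrev Vec (d : ℕ) : Type := Fin d → ℤ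

/-- An arc of a `d`-dimensional VASS with states `Q`. -/
abbrev Arc (Q : Type) (d : ℕ) : Type := Q × Vec d × Q

/-- `IsRunOn E S π q v q' v'`: the list of arcs `π` (all belonging to `E`) forms a
pseudo-run from `(q, v)` to `(q', v')`, all of whose vectors (including endpoints)
are nonnegative on every coordinate in `S`.  Taking `S = ∅` gives pseudo-runs,
`S = Set.univ` gives runs, and `S = ↑C` gives `C`-runs. -/
inductive IsRunOn {Q : Type} {d : ℕ} (E : Finset (Arc Q d)) (S : Set (Fin d)) :
    List (Arc Q d) → Q → Vec d → Q → Vec d → Prop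
  | nil (q : Q) (v : Vec d) (hv : ∀ i ∈ S, 0 ≤ v i) :
      IsRunOn E S [] q v q v
  | cons (q q' q'' : Q) (v v'' z : Vec d) (π : List (Arc Q d))
      (hv : ∀ i ∈ S, 0 ≤ v i) (he : (q, z, q') ∈ E)
      (ht : IsRunOn E S π q' (v + z) q'' v'') :
      IsRunOn E S ((q, z, q') :: π) q v q'' v''

/-- Glueing: `glue C v w` agrees with `v` on coordinates in `C` and with `w` outside `C`. -/
def glue {d : ℕ} (C : Finset (Fin d)) (v w : Vec d) : Vec d :=
  fun i => if i ∈ C then v i else w i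

/-!
Pumping with `Θ2` makes every counter large, and a pseudo-run started from counters exceeding its
total absolute displacement is a run. To come back down, take by `Θ1` a pseudo-run `π'` using
every arc more often than a covering pseudo-run `π` and the two pumping cycles `θ, θ'` together.
The arc multiset `π' - π - θ - θ'` satisfies Kirchhoff's law, contains every arc and is connected
from `q`, so it is the multiset of an Euler circuit `ζ` at `q`, of displacement `Δ' - Δ`. Then
`θ^c ζ^c π θ'^c` is a run for `c` large: before the `k`-th copy of `ζ` the counters are
`v + (c - k) Δ + k Δ' ≥ c`, and before `π` they are `v + c Δ' ≥ c`.
-/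

open Relation

theorem Relation.ReflTransGen.exists_rel_mem_not_mem {α : Type*} {r : α → α → Prop} {s : Set α}
    {a b : α} (h : ReflTransGen r a b) (ha : a ∈ s) (hb : b ∉ s) : ∃ x ∈ s, ∃ y ∉ s, r x y := by
  induction h with
  | refl => exact absurd ha hb
  | @tail b c _ hbc ih =>
    by_cases hbs : b ∈ s
    exacts [⟨b, hbs, c, hb, hbc⟩, ih hbs]

theorem Multiset.le_of_forall_card_lt_count {α : Type*} [DecidableEq α] {s t : Multiset α}
    (h : ∀ a ∈ s, card s < count a t) : s ≤ t := by
  refine Multiset.le_iff_count.2 fun a => ?_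
  by_cases ha : a ∈ s
  · exact (count_le_card a s).trans (h a ha).le
  · simp [count_eq_zero.2 ha]

theorem Finite.exists_forall_le_natCast {ι : Type*} [Finite ι] (x : ι → ℤ) :
    ∃ c : ℕ, ∀ i, x i ≤ c := by
  obtain ⟨C, hC⟩ := Finite.exists_le x
  exact ⟨C.toNat, fun i => (hC i).trans (Int.self_le_toNat C)⟩

/-- `List.count` on `Arc Q d` elaborates with the componentwise `BEq` instance of products, not
with `instBEqOfDecidableEq`. -/
theorem Multiset.coe_count_of_lawfulBEq {α : Type*} [DecidableEq α] [BEq α] [LawfulBEq α] (a : α)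
    (l : List α) : count a (l : Multiset α) = l.count a := by
  rw [coe_count]
  congr
  exact lawful_beq_subsingleton _ _

namespace Vass

variable {Q : Type} {d : ℕ}

abbrev src (a : Arc Q d) : Q := a.1

abbrev tgt (a : Arc Q d) : Q := a.2.2

inductive IsWalk : List (Arc Q d) → Q → Q → Prop
  | nil (q : Q) : IsWalk [] q q
  | cons (q : Q) (z : Vec d) {q' q'' : Q} {π : List (Arc Q d)} :
      IsWalk π q' q'' → IsWalk ((q, z, q') :: π) q q''

def eff (M : Multiset (Arc Q d)) : Vec d := (M.map fun a => a.2.1).sum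

def absEff (M : Multiset (Arc Q d)) : Vec d := (M.map fun a i => |a.2.1 i|).sum

def IsBalanced (M : Multiset (Arc Q d)) : Prop := M.map src = M.map tgt

def Adj (M : Multiset (Arc Q d)) (x y : Q) : Prop := ∃ a ∈ M, src a = x ∧ tgt a = y

theorem eff_add (M N : Multiset (Arc Q d)) : eff (M + N) = eff M + eff N := by
  simp [eff]

theorem eff_cons (q q' : Q) (z : Vec d) (π : List (Arc Q d)) :
    eff (((q, z, q') :: π : List (Arc Q d)) : Multiset (Arc Q d)) =
      z + eff (π : Multiset (Arc Q d)) := by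
  simp [eff]

theorem absEff_cons (q q' : Q) (z : Vec d) (π : List (Arc Q d)) (i : Fin d) :
    absEff (((q, z, q') :: π : List (Arc Q d)) : Multiset (Arc Q d)) i =
      |z i| + absEff (π : Multiset (Arc Q d)) i := by
  simp [absEff]

theorem absEff_nonneg (M : Multiset (Arc Q d)) : 0 ≤ absEff M :=
  Multiset.sum_nonneg fun _ hx => by
    obtain ⟨a, -, rfl⟩ := Multiset.mem_map.1 hx
    exact fun i => abs_nonneg _

theorem IsBalanced.add {M N : Multiset (Arc Q d)} (hM : IsBalanced M) (hN : IsBalanced N) :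
    IsBalanced (M + N) := by
  unfold IsBalanced at *
  rw [Multiset.map_add, Multiset.map_add, hM, hN]

theorem adj_mono {M N : Multiset (Arc Q d)} (h : M ⊆ N) : Adj M ≤ Adj N :=
  fun _ _ ⟨a, ha, hx, hy⟩ => ⟨a, h ha, hx, hy⟩

namespace IsWalk

variable {π c : List (Arc Q d)} {x y u : Q}

theorem append {ρ : List (Arc Q d)} {z : Q} (h₁ : IsWalk π x y) (h₂ : IsWalk ρ y z) :
    IsWalk (π ++ ρ) x z := by
  induction h₁ with
  | nil => exact h₂
  | cons q z _ ih => exact .cons q z (ih h₂)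

theorem map_src_add (h : IsWalk π x y) :
    (π : Multiset (Arc Q d)).map src + {y} = (π : Multiset (Arc Q d)).map tgt + {x} := by
  induction h with
  | nil => rfl
  | @cons q z q' q'' π _ ih =>
    rw [← Multiset.cons_coe, Multiset.map_cons, Multiset.map_cons, Multiset.cons_add, ih]
    simp only [← Multiset.singleton_add]
    abel

theorem isBalanced (h : IsWalk π x x) : IsBalanced (π : Multiset (Arc Q d)) :=
  add_right_cancel h.map_src_add

theorem reflTransGen_adj (h : IsWalk π x y) :
    ∀ a ∈ π, ReflTransGen (Adj (π : Multiset (Arc Q d))) x (src a) := by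
  induction h with
  | nil => simp
  | @cons q z q' q'' π _ ih =>
    intro a ha
    rcases List.mem_cons.1 ha with rfl | ha
    · exact .refl
    · exact .head ⟨(q, z, q'), by simp, rfl, rfl⟩
        (ReflTransGen.mono (adj_mono (by simp)) _ _ (ih a ha))

theorem exists_splice (h : IsWalk π x y) (hc : IsWalk c u u)
    (hu : u = x ∨ ∃ e ∈ π, tgt e = u) :
    ∃ π' : List (Arc Q d), IsWalk π' x y ∧ (π' : Multiset (Arc Q d)) = ↑c + ↑π := by
  induction h with
  | nil q =>
    rcases hu with rfl | ⟨e, he, -⟩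
    · exact ⟨c, hc, by simp⟩
    · simp at he
  | @cons q z q' q'' π hπ ih =>
    have hu' : u = q ∨ u = q' ∨ ∃ e ∈ π, tgt e = u := by
      rcases hu with hu | ⟨e, he, rfl⟩
      · exact .inl hu
      · rcases List.mem_cons.1 he with rfl | he
        exacts [.inr (.inl rfl), .inr (.inr ⟨e, he, rfl⟩)]
    rcases hu' with rfl | hu'
    · exact ⟨c ++ _, hc.append (.cons u z hπ), by simp⟩
    · obtain ⟨π', hπ', hπ'eq⟩ := ih hu'
      exact ⟨_, .cons q z hπ', by simp [← Multiset.cons_coe, hπ'eq, Multiset.add_cons]⟩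

end IsWalk

variable [DecidableEq Q]

theorem isBalanced_sub {M N : Multiset (Arc Q d)} {s t : Multiset Q} (hNM : N ≤ M)
    (hM : M.map src + s = M.map tgt + t) (hN : N.map src + s = N.map tgt + t) :
    IsBalanced (M - N) := by
  rw [← tsub_add_cancel_of_le hNM, Multiset.map_add, Multiset.map_add, add_assoc, add_assoc,
    hN] at hM
  exact add_right_cancel hM

/-- The hypothesis is Kirchhoff's law with one extra exit at `s` and one extra entry at `t`. -/
theorem exists_isWalk_le {M : Multiset (Arc Q d)} {s t : Q}
    (h : M.map src + {t} = M.map tgt + {s}) :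
    ∃ w : List (Arc Q d), IsWalk w s t ∧ (w : Multiset (Arc Q d)) ≤ M := by
  induction M using Multiset.strongInductionOn generalizing s with
  | ih M ih =>
  by_cases hst : s = t
  · exact ⟨[], hst ▸ .nil s, Multiset.zero_le _⟩
  have hs : s ∈ M.map src + {t} := h ▸ Multiset.mem_add.2 (.inr (Multiset.mem_singleton_self s))
  obtain ⟨⟨s', z, r⟩, ha, rfl⟩ := Multiset.mem_map.1
    ((Multiset.mem_add.1 hs).resolve_right (mt Multiset.mem_singleton.1 hst))
  rw [← Multiset.cons_erase ha] at h ⊢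
  have h' : (M.erase (s', z, r)).map src + {t} = (M.erase (s', z, r)).map tgt + {r} := by
    rw [Multiset.map_cons, Multiset.map_cons] at h
    simp only [← Multiset.singleton_add] at h
    refine add_left_cancel (a := {s'}) ?_
    calc _ = {s'} + (M.erase (s', z, r)).map src + {t} := by abel
      _ = _ := h
      _ = _ := by abel
  obtain ⟨w, hw, hwM⟩ := ih _ (Multiset.erase_lt.2 ha) h'
  exact ⟨_, .cons s' z hw, by simpa [← Multiset.cons_coe] using hwM⟩

theorem IsBalanced.exists_isWalk_cons_le {M : Multiset (Arc Q d)} (hM : IsBalanced M)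
    {b : Arc Q d} (hb : b ∈ M) :
    ∃ c : List (Arc Q d), IsWalk (b :: c) (src b) (src b) ∧
      ((b :: c : List _) : Multiset _) ≤ M := by
  obtain ⟨q, z, q'⟩ := b
  have hbal : (M.erase (q, z, q')).map src + {q} = (M.erase (q, z, q')).map tgt + {q'} := by
    rw [IsBalanced, ← Multiset.cons_erase hb] at hM
    simpa [Multiset.map_cons, ← Multiset.singleton_add, add_comm] using hM
  obtain ⟨c, hc, hcM⟩ := exists_isWalk_le hbal
  refine ⟨c, .cons q z hc, ?_⟩
  rw [← Multiset.cons_erase hb, ← Multiset.cons_coe]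
  exact Multiset.cons_le_cons _ hcM

/-- Hierholzer's algorithm: closed walks of `M` are spliced one by one into `w₀`. -/
theorem exists_isWalk_coe_eq_add {M : Multiset (Arc Q d)} {w₀ : List (Arc Q d)} {q : Q}
    (hM : IsBalanced M) (hw₀ : IsWalk w₀ q q)
    (hreach : ∀ a ∈ M, ReflTransGen (Adj (M + (w₀ : Multiset (Arc Q d)))) q (src a)) :
    ∃ w : List (Arc Q d), IsWalk w q q ∧ (w : Multiset (Arc Q d)) = M + w₀ := by
  induction M using Multiset.strongInductionOn generalizing w₀ with
  | ih M ih =>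
  rcases Multiset.empty_or_exists_mem M with rfl | ⟨a, ha⟩
  · exact ⟨w₀, hw₀, (zero_add _).symm⟩
  set V : Set Q := {u | u = q ∨ ∃ e ∈ w₀, tgt e = u}
  -- a path from `q` to `src a` leaves the states visited by `w₀` through an arc of `M`
  obtain ⟨b, hbM, hbV⟩ : ∃ b ∈ M, src b ∈ V := by
    by_cases haV : src a ∈ V
    · exact ⟨a, ha, haV⟩
    obtain ⟨-, hx, -, hy, e, he, rfl, rfl⟩ :=
      (hreach a ha).exists_rel_mem_not_mem (.inl rfl : q ∈ V) haV
    rcases Multiset.mem_add.1 he with he | he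
    · exact ⟨e, he, hx⟩
    · exact absurd (.inr ⟨e, he, rfl⟩) hy
  obtain ⟨c, hc, hcM⟩ := hM.exists_isWalk_cons_le hbM
  obtain ⟨w₁, hw₁, hw₁eq⟩ := hw₀.exists_splice hc hbV
  have hsum : M - (b :: c : List (Arc Q d)) + w₁ = M + w₀ := by
    rw [hw₁eq, ← add_assoc, tsub_add_cancel_of_le hcM]
  have hlt : M - (b :: c : List (Arc Q d)) < M := by
    refine lt_of_le_of_ne tsub_le_self fun heq => ?_
    have h := tsub_add_cancel_of_le hcM
    rw [heq, add_eq_left] at h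
    simp at h
  obtain ⟨w, hw, hweq⟩ := ih _ hlt (isBalanced_sub hcM (by rw [hM]) hc.map_src_add) hw₁
    (hsum ▸ fun a' ha' => hreach a' (Multiset.mem_of_le tsub_le_self ha'))
  exact ⟨w, hw, hweq.trans hsum⟩

theorem IsBalanced.exists_isWalk_coe_eq {M : Multiset (Arc Q d)} {q : Q} (hM : IsBalanced M)
    (hreach : ∀ a ∈ M, ReflTransGen (Adj M) q (src a)) :
    ∃ w : List (Arc Q d), IsWalk w q q ∧ (w : Multiset (Arc Q d)) = M := by
  simpa using exists_isWalk_coe_eq_add hM (.nil q) (by simpa using hreach)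

end Vass

open Vass

namespace IsRunOn

variable {Q : Type} {d : ℕ} {E : Finset (Arc Q d)} {S : Set (Fin d)} {π θ : List (Arc Q d)}
  {q q' : Q} {v v' : Vec d}

theorem nonneg_left (h : IsRunOn E S π q v q' v') : ∀ i ∈ S, 0 ≤ v i := by
  cases h <;> assumption

theorem nonneg_right (h : IsRunOn E S π q v q' v') : ∀ i ∈ S, 0 ≤ v' i := by
  induction h with
  | nil _ _ hv => exact hv
  | cons _ _ _ _ _ _ _ _ _ _ ih => exact ih

theorem append {ρ : List (Arc Q d)} {q'' : Q} {v'' : Vec d} (h₁ : IsRunOn E S π q v q' v')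
    (h₂ : IsRunOn E S ρ q' v' q'' v'') : IsRunOn E S (π ++ ρ) q v q'' v'' := by
  induction h₁ with
  | nil => exact h₂
  | cons q q' _ v _ z π hv he _ ih => exact .cons q q' _ v _ z _ hv he (ih h₂)

theorem mono {T : Set (Fin d)} (hTS : T ⊆ S) (h : IsRunOn E S π q v q' v') :
    IsRunOn E T π q v q' v' := by
  induction h with
  | nil q v hv => exact .nil q v fun i hi => hv i (hTS hi)
  | cons q q' q'' v v'' z π hv he _ ih =>
    exact .cons q q' q'' v v'' z π (fun i hi => hv i (hTS hi)) he ih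

theorem add (h : IsRunOn E S π q v q' v') {u : Vec d} (hu : ∀ i ∈ S, 0 ≤ u i) :
    IsRunOn E S π q (v + u) q' (v' + u) := by
  induction h with
  | nil q v hv => exact .nil q _ fun i hi => add_nonneg (hv i hi) (hu i hi)
  | cons q q' q'' v v'' z π hv he _ ih =>
    refine .cons q q' q'' _ _ z π (fun i hi => add_nonneg (hv i hi) (hu i hi)) he ?_
    rwa [add_right_comm]

theorem of_absEff_le (h : IsRunOn E ∅ π q v q' v')
    (hv : ∀ i ∈ S, absEff (π : Multiset (Arc Q d)) i ≤ v i) : IsRunOn E S π q v q' v' := by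
  induction h with
  | nil q v _ => exact .nil q v fun i hi => (absEff_nonneg _ i).trans (hv i hi)
  | cons q q' q'' v v'' z π _ he _ ih =>
    refine .cons q q' q'' v v'' z π (fun i hi => (absEff_nonneg _ i).trans (hv i hi)) he
      (ih fun i hi => ?_)
    have hvi := hv i hi
    rw [absEff_cons] at hvi
    have := neg_abs_le (z i)
    simp only [Pi.add_apply]
    linarith

theorem exists_pump_up {Δ : Vec d} (h : IsRunOn E S θ q v q (v + Δ)) (hΔ : ∀ i ∈ S, 0 ≤ Δ i) :
    ∀ n : ℕ, ∃ ρ, IsRunOn E S ρ q v q (v + n • Δ)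
  | 0 => ⟨[], by simpa using IsRunOn.nil q v h.nonneg_left⟩
  | n + 1 => by
    obtain ⟨ρ, hρ⟩ := exists_pump_up h hΔ n
    have hθ := h.add (u := n • Δ) fun i hi => nsmul_nonneg (hΔ i hi) n
    rw [add_right_comm, add_assoc, ← succ_nsmul] at hθ
    exact ⟨ρ ++ θ, hρ.append hθ⟩

theorem exists_pump_down {Δ : Vec d} (h : IsRunOn E S θ q (v + Δ) q v) (hΔ : ∀ i ∈ S, 0 ≤ Δ i) :
    ∀ n : ℕ, ∃ ρ, IsRunOn E S ρ q (v + n • Δ) q v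
  | 0 => ⟨[], by simpa using IsRunOn.nil q v h.nonneg_right⟩
  | n + 1 => by
    obtain ⟨ρ, hρ⟩ := exists_pump_down h hΔ n
    have hθ := h.add (u := n • Δ) fun i hi => nsmul_nonneg (hΔ i hi) n
    rw [add_assoc, ← succ_nsmul'] at hθ
    exact ⟨θ ++ ρ, hθ.append hρ⟩

end IsRunOn

namespace Vass

variable {Q : Type} {d : ℕ} {E : Finset (Arc Q d)} {S : Set (Fin d)} {π : List (Arc Q d)}
  {q q' : Q} {v v' : Vec d}

theorem isRunOn_empty_iff : IsRunOn E ∅ π q v q' v' ↔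
    IsWalk π q q' ∧ (∀ a ∈ π, a ∈ E) ∧ v' = v + eff (π : Multiset (Arc Q d)) := by
  constructor
  · intro h
    induction h with
    | nil q v _ => simp [IsWalk.nil, eff]
    | cons q q' q'' v v'' z π _ he _ ih =>
      obtain ⟨hw, hE, rfl⟩ := ih
      exact ⟨.cons q z hw, List.forall_mem_cons.2 ⟨he, hE⟩, by rw [eff_cons, add_assoc]⟩
  · rintro ⟨hw, hE, rfl⟩
    induction hw generalizing v with
    | nil q => simpa [eff] using IsRunOn.nil q v (by simp)
    | @cons q z q' q'' π _ ih =>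
      obtain ⟨he, hE⟩ := List.forall_mem_cons.1 hE
      refine .cons q q' q'' v _ z π (by simp) he ?_
      rw [eff_cons, ← add_assoc]
      exact ih hE

theorem exists_isRunOn_iterate {ζ : List (Arc Q d)} (hζ : IsWalk ζ q q) (hζE : ∀ a ∈ ζ, a ∈ E)
    (u : Vec d) : ∀ n : ℕ, (∀ k ≤ n, ∀ i ∈ S,
      absEff (ζ : Multiset (Arc Q d)) i ≤ (u + k • eff (ζ : Multiset (Arc Q d))) i) →
      ∃ ρ, IsRunOn E S ρ q u q (u + n • eff (ζ : Multiset (Arc Q d)))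
  | 0, hu => ⟨[], by simpa using IsRunOn.nil q u fun i hi =>
      (absEff_nonneg _ i).trans (by simpa using hu 0 le_rfl i hi)⟩
  | n + 1, hu => by
    obtain ⟨ρ, hρ⟩ := exists_isRunOn_iterate hζ hζE u n fun k hk => hu k (by omega)
    have hζrun := (isRunOn_empty_iff.2 ⟨hζ, hζE, rfl⟩ :
      IsRunOn E ∅ ζ q (u + n • eff (ζ : Multiset (Arc Q d))) q _).of_absEff_le (hu n (by omega))
    rw [add_assoc, ← succ_nsmul] at hζrun
    exact ⟨ρ ++ ζ, hρ.append hζrun⟩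

theorem exists_isRunOn_iterate_sub {ζ : List (Arc Q d)} (hζ : IsWalk ζ q q)
    (hζE : ∀ a ∈ ζ, a ∈ E) {Δ Δ' : Vec d} (hζeff : eff (ζ : Multiset (Arc Q d)) = Δ' - Δ)
    (hΔ : ∀ i ∈ S, 1 ≤ Δ i) (hΔ' : ∀ i ∈ S, 1 ≤ Δ' i) (hv : ∀ i ∈ S, 0 ≤ v i) {c : ℕ}
    (hc : ∀ i ∈ S, absEff (ζ : Multiset (Arc Q d)) i ≤ c) :
    ∃ ρ, IsRunOn E S ρ q (v + c • Δ) q (v + c • Δ') := by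
  have hend : v + c • Δ + c • (Δ' - Δ) = v + c • Δ' := by rw [smul_sub, add_add_sub_cancel]
  rw [← hend, ← hζeff]
  refine exists_isRunOn_iterate hζ hζE _ c fun k hk i hi => ?_
  simp only [hζeff, Pi.add_apply, Pi.sub_apply, Pi.mul_apply, Pi.natCast_apply, nsmul_eq_mul]
  have hk : (k : ℤ) ≤ c := by exact_mod_cast hk
  nlinarith [hc i hi, hv i hi, mul_nonneg (sub_nonneg.2 hk) (sub_nonneg.2 (hΔ i hi)),
    mul_nonneg (Nat.cast_nonneg (α := ℤ) k) (sub_nonneg.2 (hΔ' i hi))]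

theorem exists_isWalk_eff_eq_neg [DecidableEq Q]
    (hΘ : ∀ m : ℕ, 1 ≤ m → ∃ π, IsRunOn E ∅ π q v q' v' ∧ ∀ e ∈ E, m ≤ π.count e)
    {T : Multiset (Arc Q d)} (hT : IsBalanced T) (hTE : ∀ a ∈ T, a ∈ E) :
    ∃ ζ : List (Arc Q d), IsWalk ζ q q ∧ (∀ a ∈ ζ, a ∈ E) ∧
      eff (ζ : Multiset (Arc Q d)) = -eff T := by
  obtain ⟨π, hπ, hπE⟩ := hΘ 1 le_rfl
  obtain ⟨hπw, hπmem, hπeff⟩ := isRunOn_empty_iff.1 hπ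
  set R : Multiset (Arc Q d) := π + T
  have hRE : ∀ a ∈ R, a ∈ E := fun a ha =>
    (Multiset.mem_add.1 ha).elim (fun ha => hπmem a (Multiset.mem_coe.1 ha)) (hTE a)
  obtain ⟨π', hπ', hπ'E⟩ := hΘ (R.card + 1) (by omega)
  obtain ⟨hπ'w, hπ'mem, hπ'eff⟩ := isRunOn_empty_iff.1 hπ'
  have hRπ' : R ≤ π' := Multiset.le_of_forall_card_lt_count fun a ha => by
    rw [Multiset.coe_count_of_lawfulBEq]
    exact hπ'E a (hRE a ha)
  set M : Multiset (Arc Q d) := π' - R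
  have hME : ∀ a ∈ M, a ∈ E := fun a ha =>
    hπ'mem a (Multiset.mem_coe.1 (Multiset.mem_of_le tsub_le_self ha))
  have hEπ : ∀ e ∈ E, e ∈ π := fun e he =>
    Multiset.count_pos.1 ((Multiset.coe_count_of_lawfulBEq e π).trans_ge (hπE e he))
  have hEM : ∀ e ∈ E, e ∈ M := fun e he => Multiset.count_pos.1 <| by
    rw [Multiset.count_sub, Multiset.coe_count_of_lawfulBEq]
    exact Nat.sub_pos_of_lt ((Multiset.count_le_card e R).trans_lt (hπ'E e he))
  have hRbal : R.map src + {q'} = R.map tgt + {q} := by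
    rw [Multiset.map_add, Multiset.map_add, add_right_comm, hπw.map_src_add, hT, add_right_comm]
  have hreach : ∀ a ∈ M, ReflTransGen (Adj M) q (src a) := fun a ha =>
    ReflTransGen.mono (adj_mono fun e he => hEM e (hπmem e (Multiset.mem_coe.1 he))) _ _
      (hπw.reflTransGen_adj a (hEπ a (hME a ha)))
  have hMbal : IsBalanced M := isBalanced_sub hRπ' hπ'w.map_src_add hRbal
  obtain ⟨ζ, hζ, hζM⟩ := hMbal.exists_isWalk_coe_eq hreach
  refine ⟨ζ, hζ, fun a ha => hME a (hζM ▸ Multiset.mem_coe.2 ha), ?_⟩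
  have hMR := congrArg eff (tsub_add_cancel_of_le hRπ')
  rw [eff_add, eff_add, ← add_left_cancel (hπeff.symm.trans hπ'eff)] at hMR
  rw [hζM]
  linear_combination hMR

theorem exists_isWalk_eff_eq_sub [DecidableEq Q]
    (hΘ : ∀ m : ℕ, 1 ≤ m → ∃ π, IsRunOn E ∅ π q v q' v' ∧ ∀ e ∈ E, m ≤ π.count e)
    {θ θ' : List (Arc Q d)} {Δ Δ' : Vec d} (hθ : IsRunOn E S θ q v q (v + Δ))
    (hθ' : IsRunOn E S θ' q' (v' + Δ') q' v') :
    ∃ ζ : List (Arc Q d), IsWalk ζ q q ∧ (∀ a ∈ ζ, a ∈ E) ∧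
      eff (ζ : Multiset (Arc Q d)) = Δ' - Δ := by
  obtain ⟨hθw, hθE, hθeff⟩ := isRunOn_empty_iff.1 (hθ.mono (Set.empty_subset _))
  obtain ⟨hθ'w, hθ'E, hθ'eff⟩ := isRunOn_empty_iff.1 (hθ'.mono (Set.empty_subset _))
  obtain ⟨ζ, hζ, hζE, hζeff⟩ := exists_isWalk_eff_eq_neg hΘ (hθw.isBalanced.add hθ'w.isBalanced)
    fun a ha => (Multiset.mem_add.1 ha).elim (hθE a ·) (hθ'E a ·)
  refine ⟨ζ, hζ, hζE, ?_⟩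
  rw [eff_add] at hζeff
  linear_combination hζeff + hθeff + hθ'eff

end Vass

theorem vass_sufficient_condition_general {d : ℕ} {Q : Type} [DecidableEq Q]
    (E : Finset (Arc Q d)) (q q' : Q) (v v' : Vec d)
    (hv : ∀ i, 0 ≤ v i)
    (h1 : ∀ m : ℕ, 1 ≤ m →
      ∃ π, IsRunOn E ∅ π q v q' v' ∧ ∀ e ∈ E, m ≤ π.count e)
    (h2 : ∃ Δ Δ' : Vec d, (∀ i, 1 ≤ Δ i) ∧ (∀ i, 1 ≤ Δ' i) ∧
      (∃ π, IsRunOn E Set.univ π q v q (v + Δ)) ∧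
      (∃ π, IsRunOn E Set.univ π q' (v' + Δ') q' v')) :
    ∃ π, IsRunOn E Set.univ π q v q' v' := by
  obtain ⟨Δ, Δ', hΔ, hΔ', ⟨θ, hθ⟩, ⟨θ', hθ'⟩⟩ := h2
  obtain ⟨ζ, hζ, hζE, hζeff⟩ := exists_isWalk_eff_eq_sub h1 hθ hθ'
  obtain ⟨π, hπ, -⟩ := h1 1 le_rfl
  obtain ⟨c, hc⟩ := Finite.exists_forall_le_natCast fun i =>
    max (absEff (ζ : Multiset (Arc Q d)) i) (absEff (π : Multiset (Arc Q d)) i)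
  obtain ⟨ρ₁, hρ₁⟩ := hθ.exists_pump_up (fun i _ => by linarith [hΔ i]) c
  obtain ⟨ρ₂, hρ₂⟩ := exists_isRunOn_iterate_sub hζ hζE hζeff (fun i _ => hΔ i) (fun i _ => hΔ' i)
    (fun i _ => hv i) fun i _ => (le_max_left _ _).trans (hc i)
  have hπ' : IsRunOn E Set.univ π q (v + c • Δ') q' (v' + c • Δ') :=
    (hπ.add fun _ h => absurd h (Set.notMem_empty _)).of_absEff_le fun i _ => by
      simp only [Pi.add_apply, Pi.mul_apply, Pi.natCast_apply, nsmul_eq_mul]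
      nlinarith [(le_max_right _ _).trans (hc i), hv i, hΔ' i, Nat.cast_nonneg (α := ℤ) c]
  obtain ⟨ρ₄, hρ₄⟩ := hθ'.exists_pump_down (fun i _ => by linarith [hΔ' i]) c
  exact ⟨_, hρ₁.append (hρ₂.append (hπ'.append hρ₄))⟩

/-- if `Θ1` (pseudo-runs from `(q,v)` to `(q',v')` using every arc at least `m`
times, for every `m ≥ 1`) and `Θ2` (pumping runs by `Δ, Δ' ≥ 1`) hold, then there is a run
from `(q, v)` to `(q', v')`. -/
theorem vass_sufficient_condition {d : ℕ} {Q : Type} [DecidableEq Q]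
    (hd : 1 ≤ d) (E : Finset (Arc Q d)) (q q' : Q) (v v' : Vec d)
    (hv : ∀ i, 0 ≤ v i) (hv' : ∀ i, 0 ≤ v' i)
    (h1 : ∀ m : ℕ, 1 ≤ m →
      ∃ π, IsRunOn E ∅ π q v q' v' ∧ ∀ e ∈ E, m ≤ π.count e)
    (h2 : ∃ Δ Δ' : Vec d, (∀ i, 1 ≤ Δ i) ∧ (∀ i, 1 ≤ Δ' i) ∧
      (∃ π, IsRunOn E Set.univ π q v q (v + Δ)) ∧
      (∃ π, IsRunOn E Set.univ π q' (v' + Δ') q' v')) :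
    ∃ π, IsRunOn E Set.univ π q v q' v' :=
  vass_sufficient_condition_general E q q' v v' hv h1 h2
end

section
/- Let (d, Q, E) be a VASS and (q, v), (q', v') configurations satisfying: (Θ1) for every m ≥ 1 there is a pseudo-run from (q, v) to (q', v') that uses every arc of E at least m times, and (Θ2) there are Δ, Δ' ∈ ℕ^d with every coordinate ≥ 1 such that (q, v) →*ℕ (q, v + Δ) and (q', v' + Δ') →*ℕ (q', v'). Then (q', Δ) →*ℤ (q', Δ'), i.e. there is a pseudo-run from (q', Δ) to (q', Δ'). -/
/-!
Let `π₁` be a pseudo-run from `(q, v)` to `(q', v')` through every arc, `α` and `β` the runs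
of Θ2, and `π` a pseudo-run through every arc more often than `π₁`, `α` and `β` together.
Removing the arcs of `π₁`, `α` and `β` from `π` leaves a multiset of arcs with equal in- and
out-degree at every state, containing every arc and connected to `q'` along suffixes of `π₁`.
By Euler's theorem it is a closed walk at `q'`, and its displacement is
`(v' - v) - (v' - v) - Δ + Δ' = Δ' - Δ`.
-/

theorem Multiset.exists_eq_add_of_card_lt_count {α : Type*} [DecidableEq α] {X P : Multiset α}
    {s : Set α} (hX : ∀ e ∈ X, e ∈ s) (hP : ∀ e ∈ s, X.card < P.count e) :
    ∃ M, P = X + M ∧ ∀ e ∈ s, e ∈ M := by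
  have hXP : X ≤ P := Multiset.le_iff_count.2 fun e => by
    by_cases he : e ∈ X
    · exact (Multiset.count_le_card e X).trans (hP e (hX e he)).le
    · simp [Multiset.count_eq_zero_of_notMem he]
  obtain ⟨M, rfl⟩ := Multiset.le_iff_exists_add.1 hXP
  refine ⟨M, rfl, fun e he => Multiset.count_pos.1 ?_⟩
  have := hP e he
  have := Multiset.count_le_card e X
  rw [Multiset.count_add] at *
  omega

namespace VASS

section Multigraph

variable {Q L : Type*}

def IsWalk : List (Q × L × Q) → Q → Q → Prop
  | [], a, b => a = b
  | e :: W, a, b => e.1 = a ∧ IsWalk W e.2.2 b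

@[simp] theorem isWalk_nil {a b : Q} : IsWalk ([] : List (Q × L × Q)) a b ↔ a = b := Iff.rfl

@[simp] theorem isWalk_cons {e : Q × L × Q} {W : List (Q × L × Q)} {a b : Q} :
    IsWalk (e :: W) a b ↔ e.1 = a ∧ IsWalk W e.2.2 b := Iff.rfl

theorem isWalk_append {A B : List (Q × L × Q)} {a c : Q} :
    IsWalk (A ++ B) a c ↔ ∃ b, IsWalk A a b ∧ IsWalk B b c := by
  induction A generalizing a with
  | nil => simp
  | cons e A ih => simp [ih, and_assoc]

/-- `IsFlow a b M`: in the multigraph `M` every state has as many outgoing as incoming arcs,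
except that `a` has one more outgoing and `b` one more incoming arc (which cancel if `a = b`). -/
def IsFlow (a b : Q) (M : Multiset (Q × L × Q)) : Prop :=
  a ::ₘ M.map (·.2.2) = b ::ₘ M.map Prod.fst

theorem isFlow_self_iff {a : Q} {M : Multiset (Q × L × Q)} :
    IsFlow a a M ↔ M.map (·.2.2) = M.map Prod.fst :=
  Multiset.cons_inj_right a

theorem IsFlow.add {a b c : Q} {A B : Multiset (Q × L × Q)} (hA : IsFlow a b A)
    (hB : IsFlow c c B) : IsFlow a b (A + B) := by
  have hB := isFlow_self_iff.1 hB
  unfold IsFlow at *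
  simp only [Multiset.map_add, ← Multiset.cons_add, hA, hB]

theorem IsFlow.of_add {a b c : Q} {A B : Multiset (Q × L × Q)} (h : IsFlow a b (A + B))
    (hA : IsFlow a b A) : IsFlow c c B := by
  unfold IsFlow at h hA
  simp only [Multiset.map_add, ← Multiset.cons_add, hA] at h
  exact isFlow_self_iff.2 (add_left_cancel h)

theorem IsWalk.isFlow {W : List (Q × L × Q)} {a b : Q} (h : IsWalk W a b) :
    IsFlow a b (W : Multiset (Q × L × Q)) := by
  induction W generalizing a with
  | nil => rw [isWalk_nil.1 h]; rfl
  | cons e W ih =>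
    obtain ⟨rfl, h⟩ := h
    simp only [IsFlow, ← Multiset.cons_coe, Multiset.map_cons]
    rw [ih h, Multiset.cons_swap]

/-- Greedily follow unused arcs from `a`: the flow condition guarantees that the walk can only
get stuck at `b`. -/
theorem IsFlow.exists_isWalk_le {a b : Q} {R : Multiset (Q × L × Q)} (h : IsFlow a b R) :
    ∃ W : List (Q × L × Q), IsWalk W a b ∧ (W : Multiset (Q × L × Q)) ≤ R := by
  by_cases hab : a = b
  · exact ⟨[], hab, Multiset.zero_le R⟩
  have ha : a ∈ R.map Prod.fst := by
    have : a ∈ b ::ₘ R.map Prod.fst := h ▸ Multiset.mem_cons_self a _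
    exact (Multiset.mem_cons.1 this).resolve_left hab
  obtain ⟨e, he, rfl⟩ := Multiset.mem_map.1 ha
  obtain ⟨R', rfl⟩ := Multiset.exists_cons_of_mem he
  have h' : IsFlow e.2.2 b R' := by
    unfold IsFlow at h
    rw [Multiset.map_cons, Multiset.map_cons, Multiset.cons_swap b] at h
    exact Multiset.cons_inj_right _ |>.1 h
  obtain ⟨W, hW, hWR⟩ := h'.exists_isWalk_le
  exact ⟨e :: W, ⟨rfl, hW⟩, Multiset.cons_le_cons e hWR⟩
termination_by R.card
decreasing_by subst_vars; simp

theorem IsFlow.exists_cycle_le {a : Q} {R : Multiset (Q × L × Q)} (h : IsFlow a a R)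
    {g : Q × L × Q} (hg : g ∈ R) :
    ∃ C : List (Q × L × Q), IsWalk C g.1 g.1 ∧ C ≠ [] ∧ (C : Multiset (Q × L × Q)) ≤ R := by
  obtain ⟨R', rfl⟩ := Multiset.exists_cons_of_mem hg
  have h' : IsFlow g.2.2 g.1 R' := by
    have := isFlow_self_iff.1 h
    rwa [Multiset.map_cons, Multiset.map_cons] at this
  obtain ⟨W, hW, hWR⟩ := h'.exists_isWalk_le
  exact ⟨g :: W, ⟨rfl, hW⟩, List.cons_ne_nil g W, Multiset.cons_le_cons g hWR⟩

theorem IsWalk.exists_isWalk_of_mem {W : List (Q × L × Q)} {a b : Q} (h : IsWalk W a b)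
    {e : Q × L × Q} (he : e ∈ W) : ∃ P : List (Q × L × Q), IsWalk P e.1 b ∧ ∀ f ∈ P, f ∈ W := by
  obtain ⟨A, B, rfl⟩ := List.append_of_mem he
  obtain ⟨c, -, hB⟩ := isWalk_append.1 h
  obtain rfl := hB.1
  exact ⟨e :: B, hB, fun f hf => List.mem_append_right A hf⟩

theorem IsWalk.exists_mem_exit {P : List (Q × L × Q)} {a b : Q} (h : IsWalk P a b)
    {V : Set Q} (ha : a ∉ V) (hb : b ∈ V) : ∃ f ∈ P, f.1 ∉ V ∧ f.2.2 ∈ V := by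
  induction P generalizing a with
  | nil => exact absurd (isWalk_nil.1 h ▸ hb) ha
  | cons e P ih =>
    obtain ⟨rfl, h⟩ := h
    by_cases he : e.2.2 ∈ V
    · exact ⟨e, List.mem_cons_self, ha, he⟩
    · obtain ⟨f, hf, hfV⟩ := ih h he
      exact ⟨f, List.mem_cons_of_mem e hf, hfV⟩

theorem IsWalk.splice {W C : List (Q × L × Q)} {a b x : Q} (hW : IsWalk W a b)
    (hx : x ∈ a :: W.map Prod.fst) (hC : IsWalk C x x) :
    ∃ W' : List (Q × L × Q), IsWalk W' a b ∧ (W' : Multiset (Q × L × Q)) = ↑W + ↑C := by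
  rcases List.mem_cons.1 hx with rfl | hx
  · exact ⟨C ++ W, isWalk_append.2 ⟨x, hC, hW⟩, by simp [List.perm_append_comm]⟩
  obtain ⟨f, hf, rfl⟩ := List.mem_map.1 hx
  obtain ⟨A, B, rfl⟩ := List.append_of_mem hf
  obtain ⟨c, hA, hB⟩ := isWalk_append.1 hW
  obtain rfl := hB.1
  refine ⟨A ++ (C ++ f :: B), isWalk_append.2 ⟨_, hA, isWalk_append.2 ⟨_, hC, hB⟩⟩, ?_⟩
  simp only [← Multiset.coe_add]
  abel

/-- Follow the path from any arc of `R` to `q` until it first enters `V`: that arc lies in `R`,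
and the circulation `R` leaves its target again. -/
theorem IsFlow.exists_mem_fst_mem {q : Q} {V : Set Q} {A R : Multiset (Q × L × Q)}
    (hR : IsFlow q q R) (hR0 : R ≠ 0) (hqV : q ∈ V) (hAV : ∀ f ∈ A, f.1 ∈ V)
    (hreach : ∀ e ∈ A + R, ∃ P, IsWalk P e.1 q ∧ ∀ f ∈ P, f ∈ A + R) :
    ∃ g ∈ R, g.1 ∈ V := by
  obtain ⟨e, he⟩ := Multiset.exists_mem_of_ne_zero hR0
  by_cases heV : e.1 ∈ V
  · exact ⟨e, he, heV⟩
  obtain ⟨P, hP, hPAR⟩ := hreach e (Multiset.mem_add.2 (Or.inr he))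
  obtain ⟨f, hfP, hf1, hf2⟩ := hP.exists_mem_exit heV hqV
  have hfR : f ∈ R :=
    (Multiset.mem_add.1 (hPAR f hfP)).resolve_left fun hfA => hf1 (hAV f hfA)
  have : f.2.2 ∈ R.map Prod.fst := isFlow_self_iff.1 hR ▸ Multiset.mem_map_of_mem _ hfR
  obtain ⟨g, hg, hgf⟩ := Multiset.mem_map.1 this
  exact ⟨g, hg, hgf ▸ hf2⟩

/-- Hierholzer's algorithm: splice cycles of the unused arcs into `W` until all of `M` is used. -/
theorem IsFlow.exists_isWalk_eq_of_le {q : Q} {M : Multiset (Q × L × Q)} (hM : IsFlow q q M)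
    (hreach : ∀ e ∈ M, ∃ P, IsWalk P e.1 q ∧ ∀ f ∈ P, f ∈ M)
    {W : List (Q × L × Q)} (hW : IsWalk W q q) (hWM : (W : Multiset (Q × L × Q)) ≤ M) :
    ∃ W' : List (Q × L × Q), IsWalk W' q q ∧ (W' : Multiset (Q × L × Q)) = M := by
  obtain ⟨R, hMR⟩ := Multiset.le_iff_exists_add.1 hWM
  rcases eq_or_ne R 0 with rfl | hR0
  · exact ⟨W, hW, by simp [hMR]⟩
  have hR : IsFlow q q R := (hMR ▸ hM).of_add hW.isFlow
  obtain ⟨g, hgR, hgW⟩ := hR.exists_mem_fst_mem (V := {x | x ∈ q :: W.map Prod.fst}) hR0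
    List.mem_cons_self (fun f hf => List.mem_cons_of_mem q (List.mem_map_of_mem hf))
    (hMR ▸ hreach)
  obtain ⟨C, hC, hCne, hCR⟩ := hR.exists_cycle_le hgR
  obtain ⟨W', hW', hW'eq⟩ := hW.splice hgW hC
  have hW'M : (W' : Multiset (Q × L × Q)) ≤ M := hW'eq ▸ hMR ▸ add_le_add le_rfl hCR
  have : W.length < W'.length := by
    have := congrArg Multiset.card hW'eq
    simp only [Multiset.coe_card, Multiset.card_add] at this
    have := List.length_pos_of_ne_nil hCne
    omega
  exact hM.exists_isWalk_eq_of_le hreach hW' hW'M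
termination_by M.card - W.length
decreasing_by
  have := Multiset.card_le_card hW'M
  simp only [Multiset.coe_card] at this
  omega

theorem IsFlow.exists_isWalk_eq {q : Q} {M : Multiset (Q × L × Q)} (hM : IsFlow q q M)
    (hreach : ∀ e ∈ M, ∃ P, IsWalk P e.1 q ∧ ∀ f ∈ P, f ∈ M) :
    ∃ W : List (Q × L × Q), IsWalk W q q ∧ (W : Multiset (Q × L × Q)) = M :=
  hM.exists_isWalk_eq_of_le hreach (isWalk_nil.2 rfl) (Multiset.zero_le M)

theorem exists_isWalk_add_eq [DecidableEq Q] [DecidableEq L] {q q' : Q}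
    {π₁ α β π : List (Q × L × Q)}
    (hπ₁ : IsWalk π₁ q q') (hα : IsWalk α q q) (hβ : IsWalk β q' q') (hπ : IsWalk π q q')
    (hαπ₁ : ∀ e ∈ α, e ∈ π₁) (hβπ₁ : ∀ e ∈ β, e ∈ π₁) (hππ₁ : ∀ e ∈ π, e ∈ π₁)
    (hcount : ∀ e ∈ π₁, π₁.length + α.length + β.length < (π : Multiset (Q × L × Q)).count e) :
    ∃ W : List (Q × L × Q), IsWalk W q' q' ∧
      (π : Multiset (Q × L × Q)) = ↑π₁ + ↑α + ↑β + ↑W := by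
  obtain ⟨M, hπM, hπ₁M⟩ := Multiset.exists_eq_add_of_card_lt_count
    (X := (π₁ + α + β : Multiset (Q × L × Q))) (P := π) (s := {e | e ∈ π₁})
    (fun e he => by
      simp only [Multiset.mem_add, Multiset.mem_coe] at he
      rcases he with (h | h) | h
      exacts [h, hαπ₁ e h, hβπ₁ e h])
    fun e he => by simpa only [Multiset.card_add, Multiset.coe_card] using hcount e he
  have hM : IsFlow q' q' M :=
    (hπM ▸ hπ.isFlow).of_add ((hπ₁.isFlow.add hα.isFlow).add hβ.isFlow)
  have hreach : ∀ e ∈ M, ∃ P, IsWalk P e.1 q' ∧ ∀ f ∈ P, f ∈ M := by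
    intro e he
    have heπ : e ∈ π := Multiset.mem_coe.1 (hπM ▸ Multiset.mem_add.2 (Or.inr he))
    obtain ⟨P, hP, hPπ₁⟩ := hπ₁.exists_isWalk_of_mem (hππ₁ e heπ)
    exact ⟨P, hP, fun f hf => hπ₁M f (hPπ₁ f hf)⟩
  obtain ⟨W, hW, rfl⟩ := hM.exists_isWalk_eq hreach
  exact ⟨W, hW, hπM⟩

end Multigraph

variable {Q : Type} {d : ℕ}

def displacement (M : Multiset (Arc Q d)) : Vec d :=
  (M.map fun e => e.2.1).sum

@[simp] theorem displacement_cons (e : Arc Q d) (M : Multiset (Arc Q d)) :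
    displacement (e ::ₘ M) = e.2.1 + displacement M := by
  simp [displacement]

@[simp] theorem displacement_add (M N : Multiset (Arc Q d)) :
    displacement (M + N) = displacement M + displacement N := by
  simp [displacement]

theorem IsWalk.isRunOn {E : Finset (Arc Q d)} {π : List (Arc Q d)}
    {a b : Q} (h : IsWalk π a b) (hE : ∀ e ∈ π, e ∈ E) (u : Vec d) :
    IsRunOn E ∅ π a u b (u + displacement (π : Multiset (Arc Q d))) := by
  induction π generalizing a u with
  | nil => simpa [displacement, isWalk_nil.1 h] using IsRunOn.nil b u (by simp)
  | cons e π ih =>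
    obtain ⟨s, z, t⟩ := e
    obtain ⟨rfl, h⟩ := h
    have := ih h (fun f hf => hE f (List.mem_cons_of_mem _ hf)) (u + z)
    rw [← Multiset.cons_coe, displacement_cons, ← add_assoc]
    exact IsRunOn.cons _ _ _ _ _ _ _ (by simp) (hE _ List.mem_cons_self) this

end VASS

namespace IsRunOn

variable {Q : Type} {d : ℕ} {E : Finset (Arc Q d)} {S : Set (Fin d)} {π : List (Arc Q d)}
  {a b : Q} {u w : Vec d}

theorem isWalk (h : IsRunOn E S π a u b w) : VASS.IsWalk π a b := by
  induction h with
  | nil => rfl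
  | cons _ _ _ _ _ _ _ _ _ _ ih => exact ⟨rfl, ih⟩

theorem mem (h : IsRunOn E S π a u b w) : ∀ e ∈ π, e ∈ E := by
  induction h with
  | nil => simp
  | cons _ _ _ _ _ _ _ _ he _ ih => simpa [he] using ih

theorem eq_add_displacement (h : IsRunOn E S π a u b w) :
    w = u + VASS.displacement (π : Multiset (Arc Q d)) := by
  induction h with
  | nil => simp [VASS.displacement]
  | cons _ _ _ _ _ _ _ _ _ _ ih =>
    rw [ih, ← Multiset.cons_coe, VASS.displacement_cons, add_assoc]

end IsRunOn

theorem vass_claim_deltas_general {d : ℕ} {Q : Type} [DecidableEq Q]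
    (E : Finset (Arc Q d)) (q q' : Q) (v v' : Vec d)
    (h1 : ∀ m : ℕ, 1 ≤ m →
      ∃ π, IsRunOn E ∅ π q v q' v' ∧ ∀ e ∈ E, m ≤ π.count e)
    (Δ Δ' : Vec d)
    (h2a : ∃ π, IsRunOn E Set.univ π q v q (v + Δ))
    (h2b : ∃ π, IsRunOn E Set.univ π q' (v' + Δ') q' v') :
    ∃ π, IsRunOn E ∅ π q' Δ q' Δ' := by
  obtain ⟨π₁, hπ₁, hπ₁E⟩ := h1 1 le_rfl
  obtain ⟨α, hα⟩ := h2a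
  obtain ⟨β, hβ⟩ := h2b
  obtain ⟨π, hπ, hπE⟩ := h1 (π₁.length + α.length + β.length + 1) (Nat.succ_pos _)
  have hEπ₁ : ∀ e ∈ E, e ∈ π₁ := fun e he => List.count_pos_iff.1 (hπ₁E e he)
  obtain ⟨W, hW, hπW⟩ := VASS.exists_isWalk_add_eq hπ₁.isWalk hα.isWalk hβ.isWalk hπ.isWalk
    (fun e he => hEπ₁ e (hα.mem e he)) (fun e he => hEπ₁ e (hβ.mem e he))
    (fun e he => hEπ₁ e (hπ.mem e he))
    (fun e he => by
      -- `List.count` here uses the componentwise `BEq` on arcs; `convert` identifies the two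
      rw [Multiset.coe_count]
      exact Nat.lt_of_succ_le (by convert hπE e (hπ₁.mem e he)))
  have hWE : ∀ e ∈ W, e ∈ E := fun e he =>
    hπ.mem e (by rw [← Multiset.mem_coe, hπW]; simp [he])
  have hdisp := congrArg VASS.displacement hπW
  simp only [VASS.displacement_add] at hdisp
  refine ⟨W, ?_⟩
  convert hW.isRunOn hWE Δ using 1
  linear_combination hdisp + hπ.eq_add_displacement - hπ₁.eq_add_displacement -
    hα.eq_add_displacement - hβ.eq_add_displacement

/-- under `Θ1` and `Θ2` there is a pseudo-run from `(q', Δ)` to `(q', Δ')`. -/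
theorem vass_claim_deltas {d : ℕ} {Q : Type} [DecidableEq Q]
    (hd : 1 ≤ d) (E : Finset (Arc Q d)) (q q' : Q) (v v' : Vec d)
    (hv : ∀ i, 0 ≤ v i) (hv' : ∀ i, 0 ≤ v' i)
    (h1 : ∀ m : ℕ, 1 ≤ m →
      ∃ π, IsRunOn E ∅ π q v q' v' ∧ ∀ e ∈ E, m ≤ π.count e)
    (Δ Δ' : Vec d) (hΔ : ∀ i, 1 ≤ Δ i) (hΔ' : ∀ i, 1 ≤ Δ' i)
    (h2a : ∃ π, IsRunOn E Set.univ π q v q (v + Δ))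
    (h2b : ∃ π, IsRunOn E Set.univ π q' (v' + Δ') q' v') :
    ∃ π, IsRunOn E ∅ π q' Δ q' Δ' :=
  vass_claim_deltas_general E q q' v v' h1 Δ Δ' h2a h2b
end

section
/- Let (d, Q, E) be a VASS and let τ, ρ be two pseudo-runs, both from control state p to control state p', such that fold(τ) − fold(ρ) ≥ 1 on every arc of E. Then for every control state p'' that is non-isolated (i.e., incident to at least one arc of E) there exists a pseudo-run σ from p'' to p'' with fold(σ) = fold(τ) − fold(ρ). -/
set_option linter.unusedSectionVars false

section VassHelpers

variable {Q : Type} {d : ℕ} [DecidableEq Q] {E : Finset (Arc Q d)}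

lemma shift {π : List (Arc Q d)} {q q' : Q} {v v' : Vec d}
    (h : IsRunOn E ∅ π q v q' v') (c : Vec d) :
    IsRunOn E ∅ π q (v + c) q' (v' + c) := by
  induction h with
  | nil q v hv => exact .nil _ _ (by simp)
  | cons q q' q'' v v'' z π hv he ht ih =>
      refine .cons _ _ _ _ _ _ _ (by simp) he ?_
      rw [add_right_comm]; exact ih

lemma append {π₁ π₂ : List (Arc Q d)} {q q' q'' : Q} {v v' v'' : Vec d}
    (h₁ : IsRunOn E ∅ π₁ q v q' v') (h₂ : IsRunOn E ∅ π₂ q' v' q'' v'') :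
    IsRunOn E ∅ (π₁ ++ π₂) q v q'' v'' := by
  induction h₁ with
  | nil q v hv => simpa using h₂
  | cons q q' q''' v v''' z π hv he ht ih =>
      exact .cons _ _ _ _ _ _ _ (by simp) he (ih h₂)

lemma glue_runs {π₁ π₂ : List (Arc Q d)} {q q' q'' : Q} {v v' u u' : Vec d}
    (h₁ : IsRunOn E ∅ π₁ q v q' v') (h₂ : IsRunOn E ∅ π₂ q' u q'' u') :
    ∃ w, IsRunOn E ∅ (π₁ ++ π₂) q v q'' w := by
  refine ⟨u' + (v' - u), append h₁ ?_⟩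
  have := shift h₂ (v' - u)
  simpa using this

lemma split {π₁ π₂ : List (Arc Q d)} {q q'' : Q} {v v'' : Vec d}
    (h : IsRunOn E ∅ (π₁ ++ π₂) q v q'' v'') :
    ∃ q' v', IsRunOn E ∅ π₁ q v q' v' ∧ IsRunOn E ∅ π₂ q' v' q'' v'' := by
  induction π₁ generalizing q v with
  | nil => exact ⟨q, v, .nil _ _ (by simp), h⟩
  | cons e π₁ ih =>
      cases h with
      | cons q q' _ v _ z _ hv he ht =>
          obtain ⟨q₁, v₁, h₁, h₂⟩ := ih ht
          exact ⟨q₁, v₁, .cons _ _ _ _ _ _ _ (by simp) he h₁, h₂⟩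

lemma split_at {π : List (Arc Q d)} {q q'' : Q} {v v'' : Vec d} {e : Arc Q d}
    (he : e ∈ π) (h : IsRunOn E ∅ π q v q'' v'') :
    ∃ α β v₁, π = α ++ e :: β ∧ e ∈ E ∧
      IsRunOn E ∅ α q v e.1 v₁ ∧ IsRunOn E ∅ β e.2.2 (v₁ + e.2.1) q'' v'' := by
  obtain ⟨α, β, rfl⟩ := List.append_of_mem he
  obtain ⟨q₁, v₁, h₁, h₂⟩ := split h
  obtain ⟨a, z, b⟩ := e
  cases h₂ with
  | cons _ _ _ _ _ _ _ hv hE ht => exact ⟨α, β, v₁, rfl, hE, h₁, ht⟩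

lemma single {e : Arc Q d} (he : e ∈ E) (v : Vec d) :
    IsRunOn E ∅ [e] e.1 v e.2.2 (v + e.2.1) := by
  obtain ⟨a, z, b⟩ := e
  exact .cons _ _ _ _ _ _ _ (by simp) he (.nil _ _ (by simp))

end VassHelpers

/-- subtraction of pseudo-runs, Lemma 1: if `τ, ρ` are pseudo-runs from `p`
to `p'` with `fold(τ) - fold(ρ) ≥ 1` on every arc of `E`, then for every non-isolated
state `p''` there is a pseudo-run `σ` from `p''` to `p''` with
`fold(σ) = fold(τ) - fold(ρ)`. -/
theorem vass_subtract_pseudoruns {d : ℕ} {Q : Type} [DecidableEq Q]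
    (hd : 1 ≤ d) (E : Finset (Arc Q d)) (p p' p'' : Q)
    (τ ρ : List (Arc Q d)) (w₁ w₂ w₃ w₄ : Vec d)
    (hτ : IsRunOn E ∅ τ p w₁ p' w₂) (hρ : IsRunOn E ∅ ρ p w₃ p' w₄)
    (hfold : ∀ e ∈ E, ρ.count e + 1 ≤ τ.count e)
    (hp'' : ∃ e ∈ E, e.1 = p'' ∨ e.2.2 = p'') :
    ∃ σ w w', IsRunOn E ∅ σ p'' w p'' w' ∧
      ∀ e ∈ E, σ.count e + ρ.count e = τ.count e := by
  induction ρ generalizing τ p w₁ w₂ w₃ w₄ with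
  | nil =>
      -- ρ = [], hence p = p'; rotate the closed run τ to start at p''.
      cases hρ
      obtain ⟨e₀, he₀E, hp⟩ := hp''
      have hmem : e₀ ∈ τ := by
        have h1 := hfold e₀ he₀E
        exact List.count_pos_iff.mp (by omega)
      obtain ⟨α, β, v₁, hτeq, _, hα, hβ⟩ := split_at hmem hτ
      subst hτeq
      rcases hp with hp | hp
      · -- p'' = e₀.1 : take σ = (e₀ :: β) ++ α
        have hcons : IsRunOn E ∅ (e₀ :: β) e₀.1 v₁ p' w₂ := by
          obtain ⟨a, z, b⟩ := e₀
          exact .cons _ _ _ _ _ _ _ (by simp) he₀E hβ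
        obtain ⟨w, hw⟩ := glue_runs hcons hα
        rw [hp] at hw
        refine ⟨(e₀ :: β) ++ α, v₁, w, hw, ?_⟩
        intro e he
        simp only [List.count_append, List.count_cons, List.count_nil, beq_iff_eq]
        omega
      · -- p'' = e₀.2.2 : take σ = β ++ α ++ [e₀]
        obtain ⟨w0, hw0⟩ := glue_runs hα (single he₀E 0)
        obtain ⟨w, hw⟩ := glue_runs hβ hw0
        rw [hp] at hw
        refine ⟨β ++ (α ++ [e₀]), _, w, hw, ?_⟩
        intro e he
        simp only [List.count_append, List.count_cons, List.count_nil, beq_iff_eq]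
        omega
  | cons f ρ' ih =>
      cases hρ with
      | cons _ q _ _ _ z _ _ hfE ht =>
        -- now f = (p, z, q); remove one copy of f from τ and reroute.
        set e : Arc Q d := (p, z, q) with he_def
        have hmem : e ∈ τ := by
          have h1 := hfold e hfE
          exact List.count_pos_iff.mp (by omega)
        obtain ⟨τ₁, τ₂, v₁, hτeq, _, hτ₁, hτ₂⟩ := split_at hmem hτ
        subst hτeq
        have hτ₁' : IsRunOn E ∅ τ₁ p w₁ p v₁ := hτ₁
        have hτ₂' : IsRunOn E ∅ τ₂ q (v₁ + z) p' w₂ := hτ₂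
        have hcnt : 1 ≤ τ₁.count e + τ₂.count e := by
          have h1 := hfold e hfE
          simp only [List.count_append, List.count_cons, beq_iff_eq, if_pos rfl] at h1
          omega
        by_cases hm2 : e ∈ τ₂
        · -- splice τ₁ before a copy of e inside τ₂
          obtain ⟨α, β, u₁, hτ₂eq, _, hα, hβ⟩ := split_at hm2 hτ₂'
          subst hτ₂eq
          have hα' : IsRunOn E ∅ α q (v₁ + z) p u₁ := hα
          have hβ' : IsRunOn E ∅ β q (u₁ + z) p' w₂ := hβ
          have hcons : IsRunOn E ∅ (e :: β) p u₁ p' w₂ :=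
            .cons _ _ _ _ _ _ _ (by simp) hfE hβ'
          obtain ⟨u2, hu2⟩ := glue_runs hτ₁' hcons
          obtain ⟨u3, hu3⟩ := glue_runs hα' hu2
          have hfold' : ∀ e' ∈ E, ρ'.count e' + 1 ≤ (α ++ (τ₁ ++ e :: β)).count e' := by
            intro e' he'
            have h1 := hfold e' he'
            simp only [List.count_append, List.count_cons, beq_iff_eq] at h1 ⊢
            omega
          obtain ⟨σ, w, w', hσ, hσc⟩ := ih _ _ _ _ _ _ hu3 ht hfold'
          refine ⟨σ, w, w', hσ, ?_⟩
          intro e' he'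
          have h2 := hσc e' he'
          simp only [List.count_append, List.count_cons, beq_iff_eq] at h2 ⊢
          omega
        · -- the copy of e is inside τ₁ : rotate τ₁
          have hm1 : e ∈ τ₁ := by
            have h0 : τ₂.count e = 0 := List.count_eq_zero.mpr hm2
            exact List.count_pos_iff.mp (by omega)
          obtain ⟨α, β, u₁, hτ₁eq, _, hα, hβ⟩ := split_at hm1 hτ₁'
          subst hτ₁eq
          have hα' : IsRunOn E ∅ α p w₁ p u₁ := hα
          have hβ' : IsRunOn E ∅ β q (u₁ + z) p v₁ := hβ
          have hcons : IsRunOn E ∅ (e :: τ₂) p (v₁ + z - z) p' w₂ := by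
            refine .cons _ _ _ _ _ _ _ (by simp) hfE ?_
            simpa using hτ₂'
          obtain ⟨u2, hu2⟩ := glue_runs hα' hcons
          obtain ⟨u3, hu3⟩ := glue_runs hβ' hu2
          have hfold' : ∀ e' ∈ E, ρ'.count e' + 1 ≤ (β ++ (α ++ e :: τ₂)).count e' := by
            intro e' he'
            have h1 := hfold e' he'
            simp only [List.count_append, List.count_cons, beq_iff_eq] at h1 ⊢
            omega
          obtain ⟨σ, w, w', hσ, hσc⟩ := ih _ _ _ _ _ _ hu3 ht hfold'
          refine ⟨σ, w, w', hσ, ?_⟩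
          intro e' he'
          have h2 := hσc e' he'
          simp only [List.count_append, List.count_cons, beq_iff_eq] at h2 ⊢
          omega
end

section
/- Let (d, Q, E) be a VASS, C, C' ⊆ {1,…,d}, q, q' ∈ Q, v ∈ ℕ^C, v' ∈ ℕ^{C'}, and suppose (Θ1): for every m ≥ 1 there exist v̄ ∈ (ℕ≥m)^{C̄}, v̄' ∈ (ℕ≥m)^{C̄'} and a pseudo-run from (q, v ⊕ v̄) to (q', v' ⊕ v̄') traversing every arc at least m times. Then there exist v̄ ∈ ℕ^{C̄}, v̄' ∈ ℕ^{C̄'} and a pseudo-run π₀ from (q, v ⊕ v̄) to (q', v' ⊕ v̄') such that for every m > 0 there exist δ̄ ∈ ℕ^{C̄} with δ̄ ≥ m, δ̄' ∈ ℕ^{C̄'} with δ̄' ≥ m, and a pseudo-run π₁ from (q, v ⊕ (v̄ + δ̄)) to (q', v' ⊕ (v̄' + δ̄')) with fold(π₁) − fold(π₀) ≥ m on every arc of E. -/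
lemma natCast_le_sub_of_add_le {d : ℕ} {s : Finset (Fin d)} {u w : Vec d} {B : ℤ} {m : ℕ}
    (hu : ∀ i, u i ≤ B) (hw : ∀ i ∉ s, ((m + B.toNat : ℕ) : ℤ) ≤ w i) :
    ∀ i ∉ s, (m : ℤ) ≤ (w - u) i := by
  intro i hi
  have := hw i hi
  have := hu i
  simp only [Pi.sub_apply]
  omega

lemma List.count_add_le_of_add_length_le {α : Type*} [BEq α] {l l' : List α} {a : α}
    {m : ℕ} (h : m + l.length ≤ l'.count a) : l.count a + m ≤ l'.count a :=
  (Nat.add_comm _ _).trans_le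
    ((Nat.add_le_add_left List.count_le_length m).trans h)

theorem claim_linear_general {d : ℕ} {Q : Type} [DecidableEq Q]
    (E : Finset (Arc Q d)) (C C' : Finset (Fin d))
    (q q' : Q) (v v' : Vec d)
    (h1 : ∀ m : ℕ, 1 ≤ m → ∃ vb vb' : Vec d,
      (∀ i ∉ C, (m : ℤ) ≤ vb i) ∧ (∀ i ∉ C', (m : ℤ) ≤ vb' i) ∧
      ∃ π, IsRunOn E ∅ π q (glue C v vb) q' (glue C' v' vb') ∧
        ∀ e ∈ E, m ≤ π.count e) :
    ∃ vb vb' : Vec d, (∀ i ∉ C, 0 ≤ vb i) ∧ (∀ i ∉ C', 0 ≤ vb' i) ∧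
      ∃ π₀, IsRunOn E ∅ π₀ q (glue C v vb) q' (glue C' v' vb') ∧
        ∀ m : ℕ, 0 < m → ∃ δb δb' : Vec d,
          (∀ i ∉ C, (m : ℤ) ≤ δb i) ∧ (∀ i ∉ C', (m : ℤ) ≤ δb' i) ∧
          ∃ π₁, IsRunOn E ∅ π₁ q (glue C v (vb + δb)) q' (glue C' v' (vb' + δb')) ∧
            ∀ e ∈ E, π₀.count e + m ≤ π₁.count e := by
  obtain ⟨vb, vb', hvb, hvb', π₀, hπ₀, -⟩ := h1 1 le_rfl
  refine ⟨vb, vb', fun i hi => zero_le_one.trans (hvb i hi),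
    fun i hi => zero_le_one.trans (hvb' i hi), π₀, hπ₀, fun m hm => ?_⟩
  obtain ⟨B, hB⟩ := Finite.bddAbove_range (vb ⊔ vb')
  have hbound : ∀ i, vb i ≤ B ∧ vb' i ≤ B := fun i => sup_le_iff.mp (hB ⟨i, rfl⟩)
  obtain ⟨w, w', hw, hw', π₁, hπ₁, hcount⟩ := h1 (m + B.toNat + π₀.length) (by omega)
  refine ⟨w - vb, w' - vb',
    natCast_le_sub_of_add_le (fun i => (hbound i).1) fun i hi => le_trans (by omega) (hw i hi),
    natCast_le_sub_of_add_le (fun i => (hbound i).2) fun i hi => le_trans (by omega) (hw' i hi),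
    π₁, by simpa only [add_sub_cancel] using hπ₁,
    fun e he => List.count_add_le_of_add_length_le ((by omega : _ ≤ _).trans (hcount e he))⟩

/-- Claim 2: from `Θ1` one can choose a base pseudo-run `π₀` such that for
every `m > 0` there is a pseudo-run `π₁` shifted by `δ̄, δ̄' ≥ m` on the unconstrained
coordinates, whose folding exceeds that of `π₀` by at least `m` on every arc. -/
theorem claim_linear {d : ℕ} {Q : Type} [DecidableEq Q]
    (hd : 1 ≤ d) (E : Finset (Arc Q d)) (C C' : Finset (Fin d))
    (q q' : Q) (v v' : Vec d)
    (hv : ∀ i ∈ C, 0 ≤ v i) (hv' : ∀ i ∈ C', 0 ≤ v' i)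
    (h1 : ∀ m : ℕ, 1 ≤ m → ∃ vb vb' : Vec d,
      (∀ i ∉ C, (m : ℤ) ≤ vb i) ∧ (∀ i ∉ C', (m : ℤ) ≤ vb' i) ∧
      ∃ π, IsRunOn E ∅ π q (glue C v vb) q' (glue C' v' vb') ∧
        ∀ e ∈ E, m ≤ π.count e) :
    ∃ vb vb' : Vec d, (∀ i ∉ C, 0 ≤ vb i) ∧ (∀ i ∉ C', 0 ≤ vb' i) ∧
      ∃ π₀, IsRunOn E ∅ π₀ q (glue C v vb) q' (glue C' v' vb') ∧
        ∀ m : ℕ, 0 < m → ∃ δb δb' : Vec d,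
          (∀ i ∉ C, (m : ℤ) ≤ δb i) ∧ (∀ i ∉ C', (m : ℤ) ≤ δb' i) ∧
          ∃ π₁, IsRunOn E ∅ π₁ q (glue C v (vb + δb)) q' (glue C' v' (vb' + δb')) ∧
            ∀ e ∈ E, π₀.count e + m ≤ π₁.count e :=
  claim_linear_general E C C' q q' v v' h1
end

section
/- Let k, n ∈ ℕ, A ∈ ℤ^{n×k} and b ∈ ℤ^n, and let L = {x ∈ ℕ^k : A·x = b} be the set of nonnegative integer solutions of the linear Diophantine system A·x = b. Then there exist finite sets B, P ⊆ ℕ^k such that L = B + P*, where P* denotes the set of all finite sums (with repetitions allowed, including the empty sum 0) of elements of P. -/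
/-!
Every solution of `A x = b` in `ℕ^k` lies above a minimal solution, and the difference of the two
solves the homogeneous system `A x = 0`. By Dickson's lemma there are only finitely many minimal
solutions, and the homogeneous solutions form a submonoid of `ℕ^k` closed under differences,
hence finitely generated (Gordan's lemma).
-/

open Set Pointwise AddSubmonoid

def IsHybridLinearSet {M : Type*} [AddMonoid M] (s : Set M) : Prop :=
  ∃ B P : Finset M, s = (B : Set M) + closure (P : Set M)

theorem finite_setOf_minimal {α : Type*} [PartialOrder α] [WellQuasiOrderedLE α] (P : α → Prop) :
    {x | Minimal P x}.Finite :=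
  (setOfPred_minimal_antichain P).finite_of_partiallyWellOrderedOn (isPWO_of_wellQuasiOrderedLE _)

namespace AddMonoidHom

variable {M N : Type*} [AddCommMonoid M] [PartialOrder M] [CanonicallyOrderedAdd M] [AddMonoid N]

theorem preimage_singleton_eq_setOf_minimal_add_mker [WellFoundedLT M] [IsLeftCancelAdd N]
    (φ : M →+ N) (b : N) :
    φ ⁻¹' {b} = {x | Minimal (· ∈ φ ⁻¹' {b}) x} + (mker φ : Set M) := by
  ext x
  simp only [mem_add, mem_preimage, mem_singleton_iff, mem_ofPred_eq, SetLike.mem_coe, mem_mker]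
  constructor
  · intro hx
    obtain ⟨m, hmx, hm⟩ := exists_minimal_le_of_wellFoundedLT (· ∈ φ ⁻¹' {b}) x hx
    obtain ⟨c, rfl⟩ := exists_add_of_le hmx
    refine ⟨m, hm, c, ?_, rfl⟩
    rw [map_add, hm.prop] at hx
    exact add_eq_left.mp hx
  · rintro ⟨m, hm, c, hc, rfl⟩
    rw [map_add, hm.prop, hc, add_zero]

variable [WellQuasiOrderedLE M] [IsOrderedCancelAddMonoid M] [IsCancelAdd N]

theorem mker_fg (φ : M →+ N) : (mker φ).FG :=
  AddSubmonoid.fg_eqLocusM φ 0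

theorem isHybridLinearSet_preimage_singleton (φ : M →+ N) (b : N) :
    IsHybridLinearSet (φ ⁻¹' {b}) := by
  obtain ⟨P, hP⟩ := φ.mker_fg
  refine ⟨(finite_setOf_minimal (· ∈ φ ⁻¹' {b})).toFinset, P, ?_⟩
  rw [Finite.coe_toFinset, hP]
  exact φ.preimage_singleton_eq_setOf_minimal_add_mker b

end AddMonoidHom

/-- the set `L = {x ∈ ℕ^k : A·x = b}` of nonnegative integer solutions of a
linear Diophantine system is hybrid linear: `L = B + P*` for finite `B, P ⊆ ℕ^k`, where
`P*` is the additive submonoid generated by `P`. -/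
theorem diophantine_solutions_hybrid_linear (k n : ℕ)
    (A : Matrix (Fin n) (Fin k) ℤ) (b : Fin n → ℤ) :
    ∃ B P : Finset (Fin k → ℕ),
      ∀ x : Fin k → ℕ,
        A.mulVec (fun j => (x j : ℤ)) = b ↔
          ∃ b₀ ∈ B, ∃ p ∈ AddSubmonoid.closure (P : Set (Fin k → ℕ)), x = b₀ + p := by
  let φ : (Fin k → ℕ) →+ (Fin n → ℤ) :=
    A.mulVecLin.toAddMonoidHom.comp (AddMonoidHom.compLeft (Nat.castAddMonoidHom ℤ) (Fin k))
  obtain ⟨B, P, hBP⟩ := φ.isHybridLinearSet_preimage_singleton b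
  refine ⟨B, P, fun x => ?_⟩
  have hx := congrArg (x ∈ ·) hBP
  simp only [mem_add, eq_comm (b := x)] at hx
  exact hx.to_iff
end
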